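/- arXiv:1902.02478 — 4 statements merged into one kernel-verified Lean document; each statement's English description precedes it below -/
import Mathlib

section
/- Let C be an m×m complex matrix with eigenvalues η₁,...,η_m, and let A, B be n×n complex matrices. Then λ is an eigenvalue of A⊗I_m + B⊗C if and only if λ is an eigenvalue of A + η_k B for some k ∈ {1,...,m}. -/
/-!
`A ⊗ I` and `B ⊗ C` both commute with `I ⊗ C`, so an eigenvector `z` of
`M = A ⊗ I + B ⊗ C` can be chosen to be an eigenvector of `I ⊗ C` too, say with eigenvalue `η`.
Since `B ⊗ C = (B ⊗ I) (I ⊗ C)`, the matrix `M` acts on `z` as `(A + η B) ⊗ I`, and the spectra of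
`X ⊗ I` and `I ⊗ X` lie in that of `X` because `det (X ⊗ Y) = det X ^ |n| * det Y ^ |m|`.
Conversely, if `(A + η B) x = λ x` and `C y = η y`, then `x ⊗ y` is an eigenvector of `M`
for `λ`.
-/

open Matrix Kronecker

namespace Module.End

variable {K V : Type*} [Field K] [AddCommGroup V] [Module K V]

theorem exists_hasEigenvector_of_commute [IsAlgClosed K] [FiniteDimensional K V]
    {f g : End K V} (h : Commute f g) {μ : K} (hμ : f.HasEigenvalue μ) :
    ∃ ν v, f.HasEigenvector μ v ∧ g.HasEigenvector ν v := by
  have : Nontrivial (f.eigenspace μ) := Submodule.nontrivial_iff_ne_bot.mpr hμ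
  obtain ⟨ν, hν⟩ := exists_eigenvalue (g.restrict (mapsTo_genEigenspace_of_comm h μ 1))
  obtain ⟨w, hw⟩ := hν.exists_hasEigenvector
  have hw0 : (w : V) ≠ 0 := by simpa using hw.2
  exact ⟨ν, w, ⟨w.2, hw0⟩, mem_eigenspace_iff.mpr (congrArg Subtype.val hw.apply_eq_smul), hw0⟩

end Module.End

namespace Matrix

section Kronecker

variable {R : Type*} {l m n p : Type*}

theorem sub_kronecker [NonUnitalNonAssocRing R] (A₁ A₂ : Matrix l m R) (B : Matrix n p R) :
    (A₁ - A₂) ⊗ₖ B = A₁ ⊗ₖ B - A₂ ⊗ₖ B := by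
  ext; simp [sub_mul]

theorem kronecker_sub [NonUnitalNonAssocRing R] (A : Matrix l m R) (B₁ B₂ : Matrix n p R) :
    A ⊗ₖ (B₁ - B₂) = A ⊗ₖ B₁ - A ⊗ₖ B₂ := by
  ext; simp [mul_sub]

variable [Fintype m] [Fintype n]

theorem kronecker_mulVec_kronecker [CommSemiring R] (A : Matrix l m R) (B : Matrix p n R)
    (x : m → R) (y : n → R) :
    (A ⊗ₖ B) *ᵥ (fun q => x q.1 * y q.2) = fun q => (A *ᵥ x) q.1 * (B *ᵥ y) q.2 := by
  ext ⟨i, k⟩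
  simp [mulVec, dotProduct, Fintype.sum_prod_type, Finset.sum_mul_sum, mul_mul_mul_comm]

theorem Commute.kronecker [CommSemiring R] {A A' : Matrix m m R} {B B' : Matrix n n R}
    (hA : Commute A A') (hB : Commute B B') : Commute (A ⊗ₖ B) (A' ⊗ₖ B') := by
  rw [Commute, SemiconjBy, ← mul_kronecker_mul, ← mul_kronecker_mul, hA.eq, hB.eq]

theorem isUnit_kronecker [CommRing R] [DecidableEq m] [DecidableEq n]
    {A : Matrix m m R} {B : Matrix n n R} (hA : IsUnit A) (hB : IsUnit B) :
    IsUnit (A ⊗ₖ B) := by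
  rw [isUnit_iff_isUnit_det] at hA hB ⊢
  rw [det_kronecker]
  exact (hA.pow _).mul (hB.pow _)

end Kronecker

variable {K : Type*} [Field K] {m n : Type*} [Fintype m] [DecidableEq m] [Fintype n]
  [DecidableEq n]

theorem mem_spectrum_iff_exists_mulVec_eq_smul {M : Matrix m m K} {μ : K} :
    μ ∈ spectrum K M ↔ ∃ v ≠ 0, M *ᵥ v = μ • v := by
  rw [← spectrum_toLin', ← Module.End.hasEigenvalue_iff_mem_spectrum,
    Module.End.hasEigenvalue_iff, Submodule.ne_bot_iff]
  simp [and_comm]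

theorem exists_mulVec_eq_smul_of_commute [IsAlgClosed K] {M N : Matrix m m K} (h : Commute M N)
    {μ : K} (hμ : μ ∈ spectrum K M) :
    ∃ ν : K, ∃ v ≠ 0, M *ᵥ v = μ • v ∧ N *ᵥ v = ν • v := by
  rw [← spectrum_toLin', ← Module.End.hasEigenvalue_iff_mem_spectrum] at hμ
  obtain ⟨ν, v, hMv, hNv⟩ :=
    Module.End.exists_hasEigenvector_of_commute (h.map toLinAlgEquiv') hμ
  exact ⟨ν, v, hMv.2, hMv.apply_eq_smul, hNv.apply_eq_smul⟩

theorem spectrum_kronecker_one_subset (A : Matrix m m K) :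
    spectrum K (A ⊗ₖ (1 : Matrix n n K)) ⊆ spectrum K A := by
  intro μ hμ
  rw [spectrum.mem_iff, Algebra.algebraMap_eq_smul_one] at hμ ⊢
  rw [← one_kronecker_one, ← smul_kronecker, ← sub_kronecker] at hμ
  exact fun hA => hμ (isUnit_kronecker hA isUnit_one)

theorem spectrum_one_kronecker_subset (B : Matrix n n K) :
    spectrum K ((1 : Matrix m m K) ⊗ₖ B) ⊆ spectrum K B := by
  intro μ hμ
  rw [spectrum.mem_iff, Algebra.algebraMap_eq_smul_one] at hμ ⊢
  rw [← one_kronecker_one, ← kronecker_smul, ← kronecker_sub] at hμ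
  exact fun hB => hμ (isUnit_kronecker isUnit_one hB)

theorem exists_mem_spectrum_of_mem_spectrum_kronecker_one_add_kronecker [IsAlgClosed K]
    {A B : Matrix m m K} {C : Matrix n n K} {μ : K}
    (hμ : μ ∈ spectrum K (A ⊗ₖ (1 : Matrix n n K) + B ⊗ₖ C)) :
    ∃ η ∈ spectrum K C, μ ∈ spectrum K (A + η • B) := by
  have hcomm : Commute (A ⊗ₖ (1 : Matrix n n K) + B ⊗ₖ C) ((1 : Matrix m m K) ⊗ₖ C) :=
    ((Commute.one_right A).kronecker (Commute.one_left C)).add_left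
      ((Commute.one_right B).kronecker (Commute.refl C))
  obtain ⟨η, z, hz, hMz, hCz⟩ := exists_mulVec_eq_smul_of_commute hcomm hμ
  refine ⟨η, spectrum_one_kronecker_subset C
      (mem_spectrum_iff_exists_mulVec_eq_smul.mpr ⟨z, hz, hCz⟩),
    spectrum_kronecker_one_subset _ (mem_spectrum_iff_exists_mulVec_eq_smul.mpr ⟨z, hz, ?_⟩)⟩
  calc ((A + η • B) ⊗ₖ (1 : Matrix n n K)) *ᵥ z
      = (A ⊗ₖ 1) *ᵥ z + (B ⊗ₖ 1) *ᵥ ((1 ⊗ₖ C) *ᵥ z) := by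
        rw [hCz, add_kronecker, smul_kronecker, add_mulVec, smul_mulVec, mulVec_smul]
    _ = (A ⊗ₖ 1 + B ⊗ₖ C) *ᵥ z := by
        rw [mulVec_mulVec, ← mul_kronecker_mul, Matrix.mul_one, Matrix.one_mul, add_mulVec]
    _ = μ • z := hMz

theorem mem_spectrum_kronecker_one_add_kronecker {A B : Matrix m m K} {C : Matrix n n K}
    {η μ : K} (hη : η ∈ spectrum K C) (hμ : μ ∈ spectrum K (A + η • B)) :
    μ ∈ spectrum K (A ⊗ₖ (1 : Matrix n n K) + B ⊗ₖ C) := by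
  obtain ⟨y, hy, hCy⟩ := mem_spectrum_iff_exists_mulVec_eq_smul.mp hη
  obtain ⟨x, hx, hABx⟩ := mem_spectrum_iff_exists_mulVec_eq_smul.mp hμ
  obtain ⟨i, hi⟩ := Function.ne_iff.mp hx
  obtain ⟨j, hj⟩ := Function.ne_iff.mp hy
  refine mem_spectrum_iff_exists_mulVec_eq_smul.mpr
    ⟨fun q => x q.1 * y q.2, fun h => mul_ne_zero hi hj (congrFun h (i, j)), ?_⟩
  rw [add_mulVec, kronecker_mulVec_kronecker, kronecker_mulVec_kronecker, one_mulVec, hCy]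
  ext q
  have hq := congrFun hABx q.1
  simp only [add_mulVec, smul_mulVec, Pi.add_apply, Pi.smul_apply, smul_eq_mul] at hq ⊢
  linear_combination y q.2 * hq

end Matrix

/-- Eigenvalues of `A ⊗ I_m + B ⊗ C`: `λ` is an eigenvalue of `A ⊗ I_m + B ⊗ C`
iff `λ` is an eigenvalue of `A + η • B` for some eigenvalue `η` of `C`. -/
theorem kronecker_eigenvalue_iff {n m : ℕ}
    (A B : Matrix (Fin n) (Fin n) ℂ) (C : Matrix (Fin m) (Fin m) ℂ) (lam : ℂ) :
    lam ∈ spectrum ℂ (A ⊗ₖ (1 : Matrix (Fin m) (Fin m) ℂ) + B ⊗ₖ C) ↔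
      ∃ η ∈ spectrum ℂ C, lam ∈ spectrum ℂ (A + η • B) :=
  ⟨exists_mem_spectrum_of_mem_spectrum_kronecker_one_add_kronecker,
    fun ⟨_, hη, hlam⟩ => mem_spectrum_kronecker_one_add_kronecker hη hlam⟩
end

section
/- Let Γ, Σ, Ξ, Υ be n×n real diagonal matrices with positive diagonal entries such that Γ − Σ is positive definite (i.e., every diagonal entry of Γ exceeds the corresponding entry of Σ). Then the 3n×3n block matrix A = [[−Γ, 0, Υ], [−Σ, 0, 0], [−Ξ, Ξ, 0]] is Hurwitz, i.e., every eigenvalue of A has negative real part. -/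
/-!
An eigenvector of the block matrix decouples into `n` independent triples `(x, y, z)` with
`-γ x + υ z = μ x`, `-σ x = μ y`, `-ξ x + ξ y = μ z`. Eliminating `y` and `z` gives
`(μ³ + γ μ² + υ ξ μ + υ ξ σ) x = 0`, and `x = 0` would force the whole triple to vanish, so `μ`
is a root of one of these cubics. By the Routh–Hurwitz criterion for cubics, such a root lies in
the open left half-plane as soon as `υ ξ σ < γ υ ξ`, i.e. `σ < γ`.
-/

open Matrix

/-- A real square matrix is Hurwitz if every eigenvalue (over `ℂ`) has
strictly negative real part. -/
def IsHurwitz {n : Type*} [Fintype n] [DecidableEq n] (A : Matrix n n ℝ) : Prop :=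
  ∀ μ ∈ spectrum ℂ (A.map (Complex.ofReal)), μ.re < 0

theorem Complex.re_neg_of_cubic_eq_zero {a b c : ℝ} (hb : 0 < b) (hc : 0 < c) (habc : c < a * b)
    {μ : ℂ} (h : μ ^ 3 + a * μ ^ 2 + b * μ + c = 0) : μ.re < 0 := by
  have ha : 0 < a := pos_of_mul_pos_left (hc.trans habc) hb.le
  by_contra! hx
  obtain ⟨x, y⟩ := μ
  have hre := congrArg Complex.re h
  have him := congrArg Complex.im h
  simp only [pow_succ, pow_zero, one_mul, Complex.add_re, Complex.add_im, Complex.mul_re,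
    Complex.mul_im, Complex.ofReal_re, Complex.ofReal_im, Complex.zero_re,
    Complex.zero_im] at hre him hx
  rcases eq_or_ne y 0 with rfl | hy
  · nlinarith [mul_nonneg hx hx, mul_nonneg ha.le (mul_nonneg hx hx)]
  · -- the imaginary part determines `y²`; substituting it into the real part leaves a cubic
    -- in `x` with positive coefficients
    have hy2 : y ^ 2 = 3 * x ^ 2 + 2 * a * x + b := by
      have h2 : y * (3 * x ^ 2 - y ^ 2 + 2 * a * x + b) = 0 := by linear_combination him
      linear_combination -((mul_eq_zero.mp h2).resolve_left hy)
    have key : 8 * x ^ 3 + 8 * a * x ^ 2 + 2 * (b + a ^ 2) * x + (a * b - c) = 0 := by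
      linear_combination -hre - (3 * x + a) * hy2
    nlinarith [mul_nonneg (mul_nonneg hx hx) hx, mul_nonneg ha.le (mul_nonneg hx hx),
      mul_nonneg hb.le hx, mul_nonneg (mul_nonneg ha.le ha.le) hx]

theorem Matrix.exists_mulVec_eq_smul_of_mem_spectrum {K ι : Type*} [Field K] [Fintype ι]
    [DecidableEq ι] {M : Matrix ι ι K} {μ : K} (h : μ ∈ spectrum K M) :
    ∃ v ≠ 0, M *ᵥ v = μ • v := by
  rw [← spectrum_toLin', ← Module.End.hasEigenvalue_iff_mem_spectrum] at h
  obtain ⟨v, hv, hv0⟩ := h.exists_hasEigenvector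
  exact ⟨v, hv0, by simpa using Module.End.mem_eigenspace_iff.mp hv⟩

theorem cubic_mul_eq_zero_of_eigen_triple {γ σ ξ υ μ x y z : ℂ} (e₁ : -(γ * x) + υ * z = μ * x)
    (e₂ : -(σ * x) = μ * y) (e₃ : -(ξ * x) + ξ * y = μ * z) :
    (μ ^ 3 + γ * μ ^ 2 + υ * ξ * μ + υ * ξ * σ) * x = 0 := by
  linear_combination -μ ^ 2 * e₁ - υ * μ * e₃ - υ * ξ * e₂

theorem isHurwitz_fromBlocks_diagonal {ι : Type*} [Fintype ι] [DecidableEq ι]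
    (γ σ ξ υ : ι → ℝ) (hσ : ∀ i, 0 < σ i) (hξ : ∀ i, 0 < ξ i) (hυ : ∀ i, 0 < υ i)
    (hσγ : ∀ i, σ i < γ i) :
    IsHurwitz (fromBlocks (-diagonal γ) (fromCols 0 (diagonal υ))
      (fromRows (-diagonal σ) (-diagonal ξ)) (fromBlocks 0 0 (diagonal ξ) 0)) := by
  intro μ hμ
  obtain ⟨v, hv0, hv⟩ := exists_mulVec_eq_smul_of_mem_spectrum hμ
  have eqns : ∀ i,
      -(γ i * v (.inl i)) + υ i * v (.inr (.inr i)) = μ * v (.inl i) ∧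
      -(σ i * v (.inl i)) = μ * v (.inr (.inl i)) ∧
      -(ξ i * v (.inl i)) + ξ i * v (.inr (.inl i)) = μ * v (.inr (.inr i)) := fun i => by
    have h₁ := congrFun hv (.inl i)
    have h₂ := congrFun hv (.inr (.inl i))
    have h₃ := congrFun hv (.inr (.inr i))
    simp only [diagonal_neg, fromBlocks_map, Complex.ofReal_zero, diagonal_map,
      Complex.ofReal_neg, fromCols_map, Matrix.map_zero, fromRows_map, fromBlocks_mulVec,
      fromCols_mulVec, zero_mulVec, zero_add, fromRows_mulVec, add_zero, Sum.elim_inl,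
      Pi.add_apply, mulVec_diagonal, Function.comp_apply, neg_mul, Pi.smul_apply, smul_eq_mul,
      Sum.elim_inr, Pi.zero_apply] at h₁ h₂ h₃
    exact ⟨h₁, h₂, h₃⟩
  obtain ⟨i, hxi⟩ : ∃ i, v (.inl i) ≠ 0 := by
    by_contra! hx
    have hz : ∀ i, v (.inr (.inr i)) = 0 := fun i => by
      simpa [hx i, (hυ i).ne'] using (eqns i).1
    have hy : ∀ i, v (.inr (.inl i)) = 0 := fun i => by
      simpa [hx i, hz i, (hξ i).ne'] using (eqns i).2.2
    exact hv0 (funext fun | .inl i => hx i | .inr (.inl i) => hy i | .inr (.inr i) => hz i)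
  obtain ⟨e₁, e₂, e₃⟩ := eqns i
  refine Complex.re_neg_of_cubic_eq_zero (a := γ i) (mul_pos (hυ i) (hξ i))
    (mul_pos (mul_pos (hυ i) (hξ i)) (hσ i))
    (by nlinarith [mul_pos (hυ i) (hξ i), hσγ i]) ?_
  push_cast
  exact (mul_eq_zero.mp (cubic_mul_eq_zero_of_eigen_triple e₁ e₂ e₃)).resolve_right hxi

theorem pll_block_hurwitz_general {n : ℕ}
    (Γ Sig Ξ Υ : Matrix (Fin n) (Fin n) ℝ)
    (hΓd : Γ.IsDiag) (hSigd : Sig.IsDiag) (hΞd : Ξ.IsDiag) (hΥd : Υ.IsDiag)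
    (hSig : ∀ i, 0 < Sig i i)
    (hΞ : ∀ i, 0 < Ξ i i) (hΥ : ∀ i, 0 < Υ i i)
    (hGamSig : ∀ i, Sig i i < Γ i i) :
    IsHurwitz (Matrix.fromBlocks (-Γ) (Matrix.fromCols 0 Υ)
      (Matrix.fromRows (-Sig) (-Ξ)) (Matrix.fromBlocks 0 0 Ξ 0)) := by
  rw [← hΓd.diagonal_diag, ← hSigd.diagonal_diag, ← hΞd.diagonal_diag, ← hΥd.diagonal_diag]
  exact isHurwitz_fromBlocks_diagonal _ _ _ _ hSig hΞ hΥ hGamSig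

/-- If `Γ, Σ, Ξ, Υ` are `n × n` real diagonal matrices with positive diagonal
entries and `Γ i i > Σ i i` for all `i`, then the block matrix
`[[−Γ, 0, Υ], [−Σ, 0, 0], [−Ξ, Ξ, 0]]` is Hurwitz. -/
theorem pll_block_hurwitz {n : ℕ}
    (Γ Sig Ξ Υ : Matrix (Fin n) (Fin n) ℝ)
    (hΓd : Γ.IsDiag) (hSigd : Sig.IsDiag) (hΞd : Ξ.IsDiag) (hΥd : Υ.IsDiag)
    (hΓ : ∀ i, 0 < Γ i i) (hSig : ∀ i, 0 < Sig i i)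
    (hΞ : ∀ i, 0 < Ξ i i) (hΥ : ∀ i, 0 < Υ i i)
    (hGamSig : ∀ i, Sig i i < Γ i i) :
    IsHurwitz (Matrix.fromBlocks (-Γ) (Matrix.fromCols 0 Υ)
      (Matrix.fromRows (-Sig) (-Ξ)) (Matrix.fromBlocks 0 0 Ξ 0)) :=
  pll_block_hurwitz_general Γ Sig Ξ Υ hΓd hSigd hΞd hΥd hSig hΞ hΥ hGamSig
end

section
/- Let Γ, Π, Ξ, Υ ∈ ℝ^{n×n} and Θ ∈ ℝ^{m×m} be diagonal with positive entries, K ∈ ℝ^{m×n}, P skew-symmetric, Z + Zᵀ negative definite, and let B be the block matrix [[0, −Γ, 0, 0], [Ξ, −Υ, −Ξ, 0], [0, Π, ΠP, −ΠKᵀ], [0, 0, ΘK, ΘZ]]. Define V(x₁,x₂,x₃,x₄) = (1/2)(x₁ᵀΓ⁻¹x₁ + x₂ᵀΞ⁻¹x₂ + x₃ᵀΠ⁻¹x₃ + x₄ᵀΘ⁻¹x₄). Then along solutions of ẋ = Bx, the derivative of V satisfies V̇(x) = −x₂ᵀΥΞ⁻¹x₂ + (1/2)x₄ᵀ(Z +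 Zᵀ)x₄ ≤ 0. -/
/-!
The gradient `(Γ⁻¹x₁, Ξ⁻¹x₂, Π⁻¹x₃, Θ⁻¹x₄)` cancels the left factors `Γ, Ξ, Π, Θ` of the block
rows of `B` (the weights are symmetric), so `V̇(x) = xᵀSx` with
`S = [[0, -1, 0, 0], [1, -Ξ⁻¹Υ, -1, 0], [0, 1, P, -Kᵀ], [0, 0, K, Z]]`.
The off-diagonal part of `S` and the block `P` are skew-symmetric, so only the diagonal blocks
`-Ξ⁻¹Υ` and `Z` contribute to the quadratic form; both are sign-definite by hypothesis.
-/

open Matrix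

namespace Matrix

variable {ι R : Type*} [Fintype ι]

theorem IsSymm.mulVec_dotProduct_mulVec {κ : Type*} [Fintype κ] [CommSemiring R]
    {A : Matrix ι ι R} (hA : A.IsSymm) (E : Matrix ι κ R) (u : ι → R) (v : κ → R) :
    A *ᵥ u ⬝ᵥ E *ᵥ v = u ⬝ᵥ (A * E) *ᵥ v := by
  rw [← vecMul_transpose A u, hA.eq, ← dotProduct_mulVec, mulVec_mulVec]

theorem dotProduct_mulVec_self_eq_zero_of_transpose_eq_neg [CommRing R] [IsAddTorsionFree R]
    {P : Matrix ι ι R} (hP : Pᵀ = -P) (x : ι → R) : x ⬝ᵥ P *ᵥ x = 0 := by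
  refine self_eq_neg.mp ?_
  conv_lhs => rw [← dotProduct_transpose_mulVec, hP, neg_mulVec, dotProduct_neg]

variable [DecidableEq ι]

theorem IsSymm.inv_mulVec_dotProduct_mulVec [CommRing R] {D : Matrix ι ι R} (hD : D.IsSymm)
    (hdet : IsUnit D.det) (u v : ι → R) : D⁻¹ *ᵥ u ⬝ᵥ D *ᵥ v = u ⬝ᵥ v := by
  rw [hD.inv.mulVec_dotProduct_mulVec, nonsing_inv_mul _ hdet, one_mulVec]

theorem IsDiag.isUnit_det [CommRing R] {D : Matrix ι ι R} (hD : D.IsDiag)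
    (hu : ∀ i, IsUnit (D i i)) : IsUnit D.det := by
  rw [← hD.diagonal_diag, det_diagonal]
  exact IsUnit.prod_univ_iff.mpr hu

theorem IsDiag.inv [CommRing R] {D : Matrix ι ι R} (hD : D.IsDiag) : D⁻¹.IsDiag := by
  rw [← hD.diagonal_diag, inv_diagonal]
  exact isDiag_diagonal _

theorem IsDiag.commute [CommSemiring R] {A B : Matrix ι ι R} (hA : A.IsDiag) (hB : B.IsDiag) :
    Commute A B := by
  rw [← hA.diagonal_diag, ← hB.diagonal_diag]
  exact commute_diagonal _ _

theorem IsDiag.inv_mulVec_dotProduct_mulVec {𝕜 : Type*} [Field 𝕜] {D : Matrix ι ι 𝕜}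
    (hD : D.IsDiag) (hD0 : ∀ i, D i i ≠ 0) (u v : ι → 𝕜) : D⁻¹ *ᵥ u ⬝ᵥ D *ᵥ v = u ⬝ᵥ v :=
  hD.isSymm.inv_mulVec_dotProduct_mulVec (hD.isUnit_det fun i => (hD0 i).isUnit) u v

theorem IsDiag.dotProduct_mul_inv_mulVec_nonneg {𝕜 : Type*} [Field 𝕜] [LinearOrder 𝕜]
    [IsStrictOrderedRing 𝕜] {D E : Matrix ι ι 𝕜} (hD : D.IsDiag) (hE : E.IsDiag)
    (hD0 : ∀ i, 0 < D i i) (hE0 : ∀ i, 0 ≤ E i i) (u : ι → 𝕜) :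
    0 ≤ u ⬝ᵥ (E * D⁻¹) *ᵥ u := by
  have hunit : IsUnit D.diag := Pi.isUnit_iff.mpr fun i => (hD0 i).ne'.isUnit
  rw [← hD.diagonal_diag, ← hE.diagonal_diag, inv_diagonal, diagonal_mul_diagonal]
  simp only [dotProduct, mulVec_diagonal]
  refine Finset.sum_nonneg fun i _ => ?_
  have hinv : Ring.inverse D.diag i = (D i i)⁻¹ :=
    eq_inv_of_mul_eq_one_right (congrFun (Ring.mul_inverse_cancel _ hunit) i)
  rw [hinv, mul_left_comm]
  exact mul_nonneg (mul_nonneg (hE0 i) (inv_nonneg.mpr (hD0 i).le)) (mul_self_nonneg (u i))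

end Matrix

/-- Along solutions of `ẋ = Bx`, with
`V(x) = (1/2)(x₁ᵀΓ⁻¹x₁ + x₂ᵀΞ⁻¹x₂ + x₃ᵀΠ⁻¹x₃ + x₄ᵀΘ⁻¹x₄)`, the Lie derivative
`V̇(x) = ⟨∇V(x), Bx⟩` equals `−x₂ᵀΥΞ⁻¹x₂ + (1/2)x₄ᵀ(Z + Zᵀ)x₄`, which is `≤ 0`. -/
theorem lyapunov_derivative {n m : ℕ}
    (Γ Pi' Ξ Υ P : Matrix (Fin n) (Fin n) ℝ)
    (Θ Z : Matrix (Fin m) (Fin m) ℝ) (K : Matrix (Fin m) (Fin n) ℝ)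
    (hΓd : Γ.IsDiag) (hPid : Pi'.IsDiag) (hΞd : Ξ.IsDiag) (hΥd : Υ.IsDiag)
    (hΘd : Θ.IsDiag)
    (hΓ : ∀ i, 0 < Γ i i) (hPi : ∀ i, 0 < Pi' i i)
    (hΞ : ∀ i, 0 < Ξ i i) (hΥ : ∀ i, 0 < Υ i i) (hΘ : ∀ i, 0 < Θ i i)
    (hP : Pᵀ = -P)
    (hZ : (-(Z + Zᵀ)).PosDef)
    (x₁ x₂ x₃ : Fin n → ℝ) (x₄ : Fin m → ℝ) :
    let B := Matrix.fromBlocks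
      (Matrix.fromBlocks 0 (-Γ) Ξ (-Υ))
      (Matrix.fromBlocks 0 0 (-Ξ) 0)
      (Matrix.fromBlocks 0 Pi' 0 0)
      (Matrix.fromBlocks (Pi' * P) (-(Pi' * Kᵀ)) (Θ * K) (Θ * Z))
    let x : (Fin n ⊕ Fin n) ⊕ (Fin n ⊕ Fin m) → ℝ :=
      Sum.elim (Sum.elim x₁ x₂) (Sum.elim x₃ x₄)
    let gradV : (Fin n ⊕ Fin n) ⊕ (Fin n ⊕ Fin m) → ℝ :=
      Sum.elim (Sum.elim (Γ⁻¹.mulVec x₁) (Ξ⁻¹.mulVec x₂))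
        (Sum.elim (Pi'⁻¹.mulVec x₃) (Θ⁻¹.mulVec x₄))
    gradV ⬝ᵥ B.mulVec x
        = -(x₂ ⬝ᵥ (Υ * Ξ⁻¹).mulVec x₂) + (1 / 2) * (x₄ ⬝ᵥ (Z + Zᵀ).mulVec x₄) ∧
      gradV ⬝ᵥ B.mulVec x ≤ 0 := by
  intro B x gradV
  have hBx : B *ᵥ x = Sum.elim (Sum.elim (Γ *ᵥ -x₂) (Ξ *ᵥ (x₁ - x₃) - Υ *ᵥ x₂))
      (Sum.elim (Pi' *ᵥ (x₂ + P *ᵥ x₃ - Kᵀ *ᵥ x₄)) (Θ *ᵥ (K *ᵥ x₃ + Z *ᵥ x₄))) := by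
    simp only [B, x, fromBlocks_mulVec, Sum.elim_comp_inl, Sum.elim_comp_inr]
    ext ((i | i) | (i | i)) <;>
      simp only [zero_mulVec, neg_mulVec, zero_add, add_zero, Sum.elim_inl, Sum.elim_inr,
        Pi.add_apply, Pi.neg_apply, Pi.sub_apply, Pi.zero_apply, mulVec_neg, mulVec_sub,
        mulVec_add, mulVec_mulVec] <;>
      ring
  have hV : gradV ⬝ᵥ B *ᵥ x
      = -(x₂ ⬝ᵥ (Υ * Ξ⁻¹) *ᵥ x₂) + 1 / 2 * (x₄ ⬝ᵥ (Z + Zᵀ) *ᵥ x₄) := by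
    simp only [gradV, hBx, sumElim_dotProduct_sumElim, dotProduct_sub, dotProduct_add,
      hΓd.inv_mulVec_dotProduct_mulVec fun i => (hΓ i).ne',
      hΞd.inv_mulVec_dotProduct_mulVec fun i => (hΞ i).ne',
      hPid.inv_mulVec_dotProduct_mulVec fun i => (hPi i).ne',
      hΘd.inv_mulVec_dotProduct_mulVec fun i => (hΘ i).ne', dotProduct_neg,
      dotProduct_mulVec_self_eq_zero_of_transpose_eq_neg hP, dotProduct_transpose_mulVec]
    rw [hΞd.isSymm.inv.mulVec_dotProduct_mulVec, (hΞd.inv.commute hΥd).eq,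
      dotProduct_comm x₂ x₁, dotProduct_comm x₃ x₂, add_mulVec, dotProduct_add,
      dotProduct_transpose_mulVec]
    ring
  have hZ_nonpos : x₄ ⬝ᵥ (Z + Zᵀ) *ᵥ x₄ ≤ 0 := by
    have h := hZ.posSemidef.dotProduct_mulVec_nonneg x₄
    rw [star_trivial, neg_mulVec, dotProduct_neg] at h
    linarith
  have hdiss_nonneg : 0 ≤ x₂ ⬝ᵥ (Υ * Ξ⁻¹) *ᵥ x₂ :=
    hΞd.dotProduct_mul_inv_mulVec_nonneg hΥd hΞ (fun i => (hΥ i).le) x₂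
  exact ⟨hV, by rw [hV]; linarith⟩
end

section
/- Let Z ∈ ℝ^{m×m} be such that Z + Zᵀ is negative definite, and let Θ ∈ ℝ^{m×m} be diagonal with positive entries. Then ΘZ is Hurwitz. -/
/-!
If `(Θ * Z) v = μ v` with `v ≠ 0`, then `Z v = μ Θ⁻¹ v`, so `v* Z v = μ (v* Θ⁻¹ v)` with
`v* Θ⁻¹ v > 0` real. Taking real parts, `μ.re * (v* Θ⁻¹ v) = ½ v* (Z + Zᴴ) v < 0`. This works for
any positive definite `Θ` over `ℝ` or `ℂ`; the real statement follows by complexifying.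
-/

open Matrix

open ComplexOrder

namespace Matrix

variable {n 𝕜 : Type*} [Fintype n] [RCLike 𝕜]

theorem re_star_dotProduct_mulVec_neg {Z : Matrix n n 𝕜} (hZ : (-(Z + Zᴴ)).PosDef)
    {v : n → 𝕜} (hv : v ≠ 0) : RCLike.re (star v ⬝ᵥ Z *ᵥ v) < 0 := by
  have h := hZ.re_dotProduct_pos hv
  have hconj : star v ⬝ᵥ Zᴴ *ᵥ v = star (star v ⬝ᵥ Z *ᵥ v) := by
    rw [star_dotProduct, star_mulVec, conjTranspose_conjTranspose, dotProduct_mulVec]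
  rw [neg_mulVec, dotProduct_neg, add_mulVec, dotProduct_add, hconj, map_neg, map_add,
    RCLike.star_def, RCLike.conj_re] at h
  linarith

theorem re_star_dotProduct_map_ofReal_mulVec (M : Matrix n n ℝ) (x : n → ℂ) :
    (star x ⬝ᵥ M.map Complex.ofReal *ᵥ x).re =
      (Complex.re ∘ x) ⬝ᵥ M *ᵥ (Complex.re ∘ x) + (Complex.im ∘ x) ⬝ᵥ M *ᵥ (Complex.im ∘ x) := by
  simp only [dotProduct, mulVec, Finset.mul_sum, ← Finset.sum_add_distrib, Complex.re_sum]
  refine Finset.sum_congr rfl fun i _ => Finset.sum_congr rfl fun j _ => ?_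
  simp [Complex.mul_re]

theorem PosDef.map_ofReal {M : Matrix n n ℝ} (hM : M.PosDef) : (M.map Complex.ofReal).PosDef := by
  have hH : (M.map Complex.ofReal).IsHermitian :=
    hM.isHermitian.map _ fun r => (Complex.conj_ofReal r).symm
  refine .of_dotProduct_mulVec_pos hH fun x hx => Complex.lt_def.mpr ⟨?_, ?_⟩
  · have hre_im : Complex.re ∘ x ≠ 0 ∨ Complex.im ∘ x ≠ 0 := by
      by_contra! h
      exact hx (funext fun i => Complex.ext (congrFun h.1 i) (congrFun h.2 i))
    rw [re_star_dotProduct_map_ofReal_mulVec, Complex.zero_re]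
    have ha := hM.posSemidef.dotProduct_mulVec_nonneg (Complex.re ∘ x)
    have hb := hM.posSemidef.dotProduct_mulVec_nonneg (Complex.im ∘ x)
    rw [star_trivial] at ha hb
    rcases hre_im with h | h
    · exact add_pos_of_pos_of_nonneg (by simpa using hM.dotProduct_mulVec_pos h) hb
    · exact add_pos_of_nonneg_of_pos ha (by simpa using hM.dotProduct_mulVec_pos h)
  · exact (hH.im_star_dotProduct_mulVec_self x).symm

variable [DecidableEq n]

theorem exists_mulVec_eq_smul_of_mem_spectrum_s11 {A : Matrix n n 𝕜} {μ : 𝕜}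
    (hμ : μ ∈ spectrum 𝕜 A) : ∃ v ≠ 0, A *ᵥ v = μ • v := by
  rw [← spectrum_toLin', ← Module.End.hasEigenvalue_iff_mem_spectrum] at hμ
  obtain ⟨v, hv⟩ := hμ.exists_hasEigenvector
  exact ⟨v, hv.2, by simpa using hv.apply_eq_smul⟩

theorem re_lt_zero_of_mem_spectrum_posDef_mul {Θ Z : Matrix n n 𝕜} (hΘ : Θ.PosDef)
    (hZ : (-(Z + Zᴴ)).PosDef) {μ : 𝕜} (hμ : μ ∈ spectrum 𝕜 (Θ * Z)) : RCLike.re μ < 0 := by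
  obtain ⟨v, hv, hμv⟩ := exists_mulVec_eq_smul_of_mem_spectrum_s11 hμ
  have hZv : Z *ᵥ v = μ • (Θ⁻¹ *ᵥ v) := by
    rw [← mulVec_smul, ← hμv, mulVec_mulVec, ← Matrix.mul_assoc,
      nonsing_inv_mul _ ((isUnit_iff_isUnit_det Θ).mp hΘ.isUnit), Matrix.one_mul]
  have hΘv := hΘ.inv.re_dotProduct_pos hv
  have him := hΘ.inv.isHermitian.im_star_dotProduct_mulVec_self v
  have h := re_star_dotProduct_mulVec_neg hZ hv
  rw [hZv, dotProduct_smul, smul_eq_mul, RCLike.mul_re, him, mul_zero, sub_zero] at h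
  exact neg_of_mul_neg_left h hΘv.le

end Matrix

/-- If `Z + Zᵀ` is negative definite and `Θ` is diagonal with positive entries,
then `ΘZ` is Hurwitz. -/
theorem theta_z_hurwitz {m : ℕ} (Θ Z : Matrix (Fin m) (Fin m) ℝ)
    (hΘd : Θ.IsDiag) (hΘ : ∀ i, 0 < Θ i i) (hZ : (-(Z + Zᵀ)).PosDef) :
    IsHurwitz (Θ * Z) := by
  intro μ hμ
  have hΘpos : Θ.PosDef := hΘd.diagonal_diag ▸ PosDef.diagonal fun i => hΘ i
  have hmap : (Θ * Z).map Complex.ofReal = Θ.map Complex.ofReal * Z.map Complex.ofReal :=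
    Matrix.map_mul (f := Complex.ofRealHom)
  have hsym : (-(Z + Zᵀ)).map Complex.ofReal =
      -(Z.map Complex.ofReal + (Z.map Complex.ofReal)ᴴ) := by
    ext i j
    simp
  rw [hmap] at hμ
  exact re_lt_zero_of_mem_spectrum_posDef_mul hΘpos.map_ofReal (hsym ▸ hZ.map_ofReal) hμ
end
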